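/- arXiv:1801.00141 — 7 statements merged into one kernel-verified Lean document; each statement's English description precedes it below -/
import Mathlib

section
/- Let p be a random variable on [0,1] with a density f that is nondecreasing on (0,1). Then for all 0 ≤ γ ≤ λ ≤ 1 with P(p ≤ λ) > 0, P(p < γ | p ≤ λ) ≤ γ/λ. -/
open MeasureTheory Set

/-! A nondecreasing density makes the distribution function `F t = ∫ x in 0..t, f x` convex with
`F 0 = 0`, so `F t / t` is nondecreasing in `t`; and `P(p < γ) ≤ F γ`. -/

theorem MonotoneOn.mul_intervalIntegral_le_mul {f : ℝ → ℝ} {a b c : ℝ}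
    (hf : MonotoneOn f (Ioo a b)) (hint : IntervalIntegrable f volume a b)
    (hac : a ≤ c) (hcb : c ≤ b) :
    (b - a) * ∫ x in a..c, f x ≤ (c - a) * ∫ x in a..b, f x := by
  rcases hac.eq_or_lt with rfl | hac'
  · simp
  rcases hcb.eq_or_lt with rfl | hcb'
  · rfl
  have hc : c ∈ Ioo a b := ⟨hac', hcb'⟩
  have hint_ac : IntervalIntegrable f volume a c :=
    hint.mono_set (by rw [uIcc_of_le hac, uIcc_of_le (hac.trans hcb)]; gcongr)
  have hint_cb : IntervalIntegrable f volume c b :=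
    hint.mono_set (by rw [uIcc_of_le hcb, uIcc_of_le (hac.trans hcb)]; gcongr)
  have hleft : ∫ x in a..c, f x ≤ (c - a) * f c := by
    simpa [hac] using intervalIntegral.integral_mono_on_of_le_Ioo hac hint_ac
      intervalIntegrable_const fun x hx => hf ⟨hx.1, hx.2.trans hcb'⟩ hc hx.2.le
  have hright : (b - c) * f c ≤ ∫ x in c..b, f x := by
    simpa [hcb] using intervalIntegral.integral_mono_on_of_le_Ioo hcb intervalIntegrable_const
      hint_cb fun x hx => hf hc ⟨hac'.trans hx.1, hx.2⟩ hx.1.le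
  rw [← intervalIntegral.integral_add_adjacent_intervals hint_ac hint_cb]
  nlinarith [mul_le_mul_of_nonneg_left hleft (sub_nonneg.2 hcb),
    mul_le_mul_of_nonneg_left hright (sub_nonneg.2 hac)]

theorem supraUniform_of_monotone_density_general
    {Ω : Type*} [MeasurableSpace Ω] (μ : Measure Ω) [IsProbabilityMeasure μ]
    (p : Ω → ℝ)
    (f : ℝ → ℝ) (hf_int : IntegrableOn f (Set.Icc 0 1))
    (hf_mono : MonotoneOn f (Set.Ioo (0 : ℝ) 1))
    (hdens : ∀ t ∈ Set.Icc (0 : ℝ) 1,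
      (μ {ω | p ω ≤ t}).toReal = ∫ x in Set.Ioc (0 : ℝ) t, f x) :
    ∀ γ lam : ℝ, 0 ≤ γ → γ ≤ lam → lam ≤ 1 →
      0 < (μ {ω | p ω ≤ lam}).toReal →
      (μ {ω | p ω < γ}).toReal / (μ {ω | p ω ≤ lam}).toReal ≤ γ / lam := by
  intro γ lam hγ hγlam hlam1 hpos
  have hcdf : ∀ t ∈ Icc (0 : ℝ) 1, (μ {ω | p ω ≤ t}).toReal = ∫ x in (0 : ℝ)..t, f x :=
    fun t ht => (hdens t ht).trans (intervalIntegral.integral_of_le ht.1).symm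
  have hlam : lam ∈ Icc (0 : ℝ) 1 := ⟨hγ.trans hγlam, hlam1⟩
  rw [hcdf lam hlam] at hpos ⊢
  have hlam0 : 0 < lam := hlam.1.lt_of_ne (by rintro rfl; simp at hpos)
  have hstrict : (μ {ω | p ω < γ}).toReal ≤ ∫ x in (0 : ℝ)..γ, f x :=
    (measureReal_mono fun ω (hω : p ω < γ) => hω.le).trans_eq (hcdf γ ⟨hγ, hγlam.trans hlam1⟩)
  have hmono := (hf_mono.mono (Ioo_subset_Ioo_right hlam1)).mul_intervalIntegral_le_mul
    ((intervalIntegrable_iff_integrableOn_Icc_of_le hlam.1).2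
      (hf_int.mono_set (Icc_subset_Icc_right hlam1))) hγ hγlam
  calc (μ {ω | p ω < γ}).toReal / ∫ x in (0 : ℝ)..lam, f x
      ≤ (∫ x in (0 : ℝ)..γ, f x) / ∫ x in (0 : ℝ)..lam, f x := by gcongr
    _ ≤ γ / lam := by rw [div_le_div_iff₀ hpos hlam0]; linarith

/-- If `p` is a `[0,1]`-valued random variable with a density `f`
(w.r.t. Lebesgue measure) that is nondecreasing on `(0,1)`, i.e.
`P(p ≤ t) = ∫_0^t f(x) dx` for `t ∈ [0,1]`, then for all `0 ≤ γ ≤ lam ≤ 1`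
with `P(p ≤ lam) > 0`, `P(p < γ) / P(p ≤ lam) ≤ γ / lam`. -/
theorem supraUniform_of_monotone_density
    {Ω : Type*} [MeasurableSpace Ω] (μ : Measure Ω) [IsProbabilityMeasure μ]
    (p : Ω → ℝ) (hmeas : Measurable p) (hrange : ∀ ω, p ω ∈ Set.Icc (0 : ℝ) 1)
    (f : ℝ → ℝ) (hf_nonneg : ∀ x, 0 ≤ f x) (hf_int : IntegrableOn f (Set.Icc 0 1))
    (hf_mono : MonotoneOn f (Set.Ioo (0 : ℝ) 1))
    (hdens : ∀ t ∈ Set.Icc (0 : ℝ) 1,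
      (μ {ω | p ω ≤ t}).toReal = ∫ x in Set.Ioc (0 : ℝ) t, f x) :
    ∀ γ lam : ℝ, 0 ≤ γ → γ ≤ lam → lam ≤ 1 →
      0 < (μ {ω | p ω ≤ lam}).toReal →
      (μ {ω | p ω < γ}).toReal / (μ {ω | p ω ≤ lam}).toReal ≤ γ / lam :=
  supraUniform_of_monotone_density_general μ p f hf_int hf_mono hdens
end

section
/- Let p_1, p_2, ..., be supra-uniform [0,1]-valued random variables. Suppose R_m/m converges in probability to η > 0 and E[R_m/m] converges to η as m → ∞, where R_m = Σ_{i=1}^m 1{p_i ≤ λ}. Then limsup_{m→∞} P(∪_{i=1}^m {p_i < αλ/max(R_m,1)}) ≤ α. -/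
/-!
The CBP rejects a true `p_i` only if `p_i < αλ / max(R_m, 1)`. Fix `d < η`. Outside the event
`{R_m ≤ d m}`, whose probability vanishes since `R_m / m → η` in probability, the threshold is
below `γ = αλ / (d m) ≤ λ`, so every rejected `p_i` lies in `{p_i < γ} ∩ {p_i ≤ λ}`. Supra-uniformity
bounds the probability of that event by `(γ/λ) P(p_i ≤ λ)`, and summing over `i` gives
`(α/d) E[R_m/m] → αη/d`. Letting `d ↑ η` yields the bound `α`.
-/

set_option autoImplicit false

open MeasureTheory Filter

/-- A `[0,1]`-valued random variable `p` is supra-uniform if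
`P(p < γ | p ≤ lam') ≤ γ/lam'` for all `0 ≤ γ ≤ lam' ≤ 1` with `P(p ≤ lam') > 0`. -/
def SupraUniform {Ω : Type*} [MeasurableSpace Ω] (μ : Measure Ω) (p : Ω → ℝ) : Prop :=
  ∀ γ lam : ℝ, 0 ≤ γ → γ ≤ lam → lam ≤ 1 →
    0 < (μ {ω | p ω ≤ lam}).toReal →
    (μ ({ω | p ω < γ} ∩ {ω | p ω ≤ lam})).toReal / (μ {ω | p ω ≤ lam}).toReal ≤ γ / lam

open Finset

section

variable {Ω : Type*} [MeasurableSpace Ω] {μ : Measure Ω} [IsFiniteMeasure μ]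

theorem SupraUniform.measureReal_lt_inter_le_le {p : Ω → ℝ}
    (hp : SupraUniform μ p) {γ lam : ℝ} (hγ : 0 ≤ γ) (hγlam : γ ≤ lam) (hlam : lam ≤ 1) :
    μ.real ({ω | p ω < γ} ∩ {ω | p ω ≤ lam}) ≤ γ / lam * μ.real {ω | p ω ≤ lam} := by
  rcases (measureReal_nonneg (μ := μ) (s := {ω | p ω ≤ lam})).eq_or_lt with hzero | hpos
  · calc _ ≤ μ.real {ω | p ω ≤ lam} := measureReal_mono Set.inter_subset_right
      _ = γ / lam * μ.real {ω | p ω ≤ lam} := by rw [← hzero, mul_zero]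
  · exact (div_le_iff₀ hpos).mp (hp γ lam hγ hγlam hlam hpos)

theorem integral_sum_ite_le_eq_sum_measureReal {ι : Type*} {p : ι → Ω → ℝ}
    (hmeas : ∀ i, Measurable (p i)) (lam : ℝ) (s : Finset ι) :
    ∫ ω, ∑ i ∈ s, (if p i ω ≤ lam then (1 : ℝ) else 0) ∂μ
      = ∑ i ∈ s, μ.real {ω | p i ω ≤ lam} := by
  have hset : ∀ i, MeasurableSet {ω | p i ω ≤ lam} := fun i =>
    measurableSet_le (hmeas i) measurable_const
  have hind : ∀ i ω, (if p i ω ≤ lam then (1 : ℝ) else 0) = {ω | p i ω ≤ lam}.indicator 1 ω :=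
    fun i ω => by simp [Set.indicator_apply]
  simp_rw [hind]
  rw [integral_finsetSum _ fun i _ => (integrable_const 1).indicator (hset i)]
  exact Finset.sum_congr rfl fun i _ => integral_indicator_one (hset i)

theorem measureReal_cbp_rejects_le {p : ℕ → Ω → ℝ}
    (hsu : ∀ i, SupraUniform μ (p i)) {α lam D : ℝ} (hα : 0 ≤ α) (hlam : lam ∈ Set.Ioc 0 1)
    (hD : 0 < D) (hαD : α ≤ D) (R : Ω → ℝ) (m : ℕ) :
    μ.real {ω | ∃ i < m, p i ω < α * lam / max (R ω) 1}
      ≤ μ.real {ω | R ω ≤ D} + α / D * ∑ i ∈ range m, μ.real {ω | p i ω ≤ lam} := by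
  obtain ⟨hlam0, hlam1⟩ := hlam
  set γ := α * lam / D
  have hγ0 : 0 ≤ γ := by positivity
  have hγlam : γ ≤ lam := by rw [div_le_iff₀ hD]; nlinarith
  have hsub : {ω | ∃ i < m, p i ω < α * lam / max (R ω) 1}
      ⊆ {ω | R ω ≤ D} ∪ ⋃ i ∈ range m, {ω | p i ω < γ} ∩ {ω | p i ω ≤ lam} := by
    rintro ω ⟨i, him, hpi⟩
    by_cases hR : R ω ≤ D
    · exact Or.inl hR
    have hthr : α * lam / max (R ω) 1 ≤ γ :=
      div_le_div_of_nonneg_left (by positivity) hD ((not_le.mp hR).le.trans (le_max_left _ _))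
    exact Or.inr (Set.mem_biUnion (mem_range.mpr him)
      ⟨hpi.trans_le hthr, (hpi.trans_le (hthr.trans hγlam)).le⟩)
  calc μ.real {ω | ∃ i < m, p i ω < α * lam / max (R ω) 1}
      ≤ μ.real {ω | R ω ≤ D}
        + μ.real (⋃ i ∈ range m, {ω | p i ω < γ} ∩ {ω | p i ω ≤ lam}) :=
        (measureReal_mono hsub).trans (measureReal_union_le _ _)
    _ ≤ μ.real {ω | R ω ≤ D}
        + ∑ i ∈ range m, γ / lam * μ.real {ω | p i ω ≤ lam} := by
        gcongr
        refine (measureReal_biUnion_finset_le _ _).trans (sum_le_sum fun i _ => ?_)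
        exact (hsu i).measureReal_lt_inter_le_le hγ0 hγlam hlam1
    _ = μ.real {ω | R ω ≤ D} + α / D * ∑ i ∈ range m, μ.real {ω | p i ω ≤ lam} := by
        rw [← mul_sum]; congr 2; simp only [γ]; field_simp

end

theorem setOf_le_mul_subset_abs_div_sub {Ω : Type*} (X : Ω → ℝ) {d η m : ℝ} (hm : 0 < m) :
    {ω | X ω ≤ d * m} ⊆ {ω | η - d ≤ |X ω / m - η|} := fun ω (hω : X ω ≤ d * m) => by
  have hXd : X ω / m ≤ d := by rwa [div_le_iff₀ hm]
  rw [Set.mem_ofPred_eq, abs_sub_comm]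
  exact (by linarith : η - d ≤ η - X ω / m).trans (le_abs_self _)

theorem cbp_fwer_asymptotic_general
    {Ω : Type*} [MeasurableSpace Ω] (μ : Measure Ω) [IsProbabilityMeasure μ]
    (p : ℕ → Ω → ℝ) (hmeas : ∀ i, Measurable (p i))
    (hsu : ∀ i, SupraUniform μ (p i))
    (lam α : ℝ) (hlam : lam ∈ Set.Ioc (0 : ℝ) 1) (hα : α ∈ Set.Ioo (0 : ℝ) 1)
    (R : ℕ → Ω → ℝ)
    (hR : ∀ m ω, R m ω = ∑ i ∈ Finset.range m, (if p i ω ≤ lam then (1 : ℝ) else 0))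
    (η : ℝ) (hη : 0 < η)
    (hprob : ∀ ε : ℝ, 0 < ε →
      Tendsto (fun m : ℕ => (μ {ω | ε ≤ |R m ω / m - η|}).toReal) atTop (nhds 0))
    (hexp : Tendsto (fun m : ℕ => ∫ ω, R m ω / m ∂μ) atTop (nhds η)) :
    limsup (fun m : ℕ =>
        (μ {ω | ∃ i < m, p i ω < α * lam / max (R m ω) 1}).toReal) atTop ≤ α := by
  refine le_of_forall_gt_imp_ge_of_dense fun c hc => ?_
  have hc0 : 0 < c := hα.1.trans hc
  set d := α * η / c
  have hd0 : 0 < d := div_pos (mul_pos hα.1 hη) hc0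
  have hdη : d < η := by rw [div_lt_iff₀ hc0]; nlinarith
  have hmean : ∀ m : ℕ, ∫ ω, R m ω / m ∂μ = (∑ i ∈ range m, μ.real {ω | p i ω ≤ lam}) / m :=
    fun m => by simp_rw [hR, integral_div, integral_sum_ite_le_eq_sum_measureReal hmeas]
  have hbound : ∀ᶠ m : ℕ in atTop, μ.real {ω | ∃ i < m, p i ω < α * lam / max (R m ω) 1}
      ≤ μ.real {ω | η - d ≤ |R m ω / m - η|} + α / d * ∫ ω, R m ω / m ∂μ := by
    filter_upwards [eventually_ge_atTop 1, eventually_ge_atTop ⌈α / d⌉₊] with m hm1 hmd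
    have hm0 : (0 : ℝ) < m := by exact_mod_cast hm1
    have hαdm : α ≤ d * m := by rw [← div_le_iff₀' hd0]; exact Nat.ceil_le.mp hmd
    refine (measureReal_cbp_rejects_le hsu hα.1.le hlam (by positivity) hαdm (R m) m).trans ?_
    gcongr ?_ + ?_
    · exact measureReal_mono (setOf_le_mul_subset_abs_div_sub (R m) hm0)
    · rw [hmean]; exact le_of_eq (by ring)
  have hlim : Tendsto (fun m : ℕ => μ.real {ω | η - d ≤ |R m ω / m - η|}
      + α / d * ∫ ω, R m ω / m ∂μ) atTop (nhds c) := by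
    have hc_eq : 0 + α / d * η = c := by
      simp only [d, zero_add]; field_simp [hα.1.ne']
    rw [← hc_eq]
    exact (hprob _ (sub_pos.mpr hdη)).add (hexp.const_mul (α / d))
  exact (limsup_le_limsup hbound (isCoboundedUnder_le_of_le atTop fun _ => measureReal_nonneg)
    hlim.isBoundedUnder_le).trans_eq hlim.limsup_eq

/-- asymptotic FWER control of the CBP: let `p₁, p₂, …` be
supra-uniform `[0,1]`-valued random variables, and `R m = ∑_{i<m} 1{p_i ≤ lam}`.
If `R m / m → η > 0` in probability and `E[R m / m] → η`, then
`limsup_m P(⋃_{i<m} {p_i < α lam / max(R_m,1)}) ≤ α`. -/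
theorem cbp_fwer_asymptotic
    {Ω : Type*} [MeasurableSpace Ω] (μ : Measure Ω) [IsProbabilityMeasure μ]
    (p : ℕ → Ω → ℝ) (hmeas : ∀ i, Measurable (p i))
    (hrange : ∀ i ω, p i ω ∈ Set.Icc (0 : ℝ) 1)
    (hsu : ∀ i, SupraUniform μ (p i))
    (lam α : ℝ) (hlam : lam ∈ Set.Ioc (0 : ℝ) 1) (hα : α ∈ Set.Ioo (0 : ℝ) 1)
    (R : ℕ → Ω → ℝ)
    (hR : ∀ m ω, R m ω = ∑ i ∈ Finset.range m, (if p i ω ≤ lam then (1 : ℝ) else 0))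
    (η : ℝ) (hη : 0 < η)
    (hprob : ∀ ε : ℝ, 0 < ε →
      Tendsto (fun m : ℕ => (μ {ω | ε ≤ |R m ω / m - η|}).toReal) atTop (nhds 0))
    (hexp : Tendsto (fun m : ℕ => ∫ ω, R m ω / m ∂μ) atTop (nhds η)) :
    limsup (fun m : ℕ =>
        (μ {ω | ∃ i < m, p i ω < α * lam / max (R m ω) 1}).toReal) atTop ≤ α :=
  cbp_fwer_asymptotic_general μ p hmeas hsu lam α hlam hα R hR η hη hprob hexp
end

section
/- Let p_1, ..., p_m be supra-uniform [0,1]-valued random variables, λ ∈ (0,1], α ∈ (0,1), and let R = Σ_{i=1}^m 1{p_i ≤ λ} with E[R] > 0. Then the procedure rejecting hypothesis i when p_i < αλ/E[R] controls the FWER: P(∪_{i=1}^m {p_i < αλ/E[R]}) ≤ α. -/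
set_option autoImplicit false

open MeasureTheory Finset

/-! The event `{p_i < αλ/E[R]}` lies inside `{p_i ≤ λ}`, so supra-uniformity bounds its
probability by `(αλ/E[R])/λ · P(p_i ≤ λ) = α/E[R] · P(p_i ≤ λ)`. Summing over `i` (union bound)
gives `α/E[R] · Σ_i P(p_i ≤ λ)`, and the sum is exactly `E[R]`. -/

section

variable {Ω : Type*} [MeasurableSpace Ω] {μ : Measure Ω}

theorem integral_sum_indicator_one [IsFiniteMeasure μ] {ι : Type*} (s : Finset ι)
    {t : ι → Set Ω} (ht : ∀ i ∈ s, MeasurableSet (t i)) :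
    ∫ ω, ∑ i ∈ s, (t i).indicator 1 ω ∂μ = ∑ i ∈ s, μ.real (t i) := by
  rw [integral_finsetSum (f := fun i => (t i).indicator 1) s
    fun i hi => (integrable_const (1 : ℝ)).indicator (ht i hi)]
  exact Finset.sum_congr rfl fun i hi => integral_indicator_one (ht i hi)

theorem SupraUniform.measureReal_lt_le [IsFiniteMeasure μ] {p : Ω → ℝ} (hp : SupraUniform μ p)
    {γ lam : ℝ} (hγ : 0 ≤ γ) (hγlam : γ ≤ lam) (hlam : lam ≤ 1) :
    μ.real {ω | p ω < γ} ≤ γ / lam * μ.real {ω | p ω ≤ lam} := by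
  have hsub : {ω | p ω < γ} ⊆ {ω | p ω ≤ lam} := fun ω hω => hω.le.trans hγlam
  rcases (measureReal_nonneg : 0 ≤ μ.real {ω | p ω ≤ lam}).eq_or_lt with hzero | hpos
  · rw [← hzero, mul_zero]
    exact (measureReal_mono hsub).trans_eq hzero.symm
  · have hratio := hp γ lam hγ hγlam hlam hpos
    rw [Set.inter_eq_left.2 hsub] at hratio
    exact (div_le_iff₀ hpos).1 hratio

theorem measureReal_exists_lt_le_of_supraUniform [IsFiniteMeasure μ] {ι : Type*} [Fintype ι]
    {p : ι → Ω → ℝ} (hp : ∀ i, SupraUniform μ (p i))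
    {γ lam : ℝ} (hγ : 0 ≤ γ) (hγlam : γ ≤ lam) (hlam : lam ≤ 1) :
    μ.real {ω | ∃ i, p i ω < γ} ≤ γ / lam * ∑ i, μ.real {ω | p i ω ≤ lam} := by
  rw [Finset.mul_sum, Set.ofPred_exists]
  exact (measureReal_iUnion_fintype_le _).trans
    (Finset.sum_le_sum fun i _ => (hp i).measureReal_lt_le hγ hγlam hlam)

end

theorem oracle_conditionalized_bonferroni_fwer_general
    {Ω : Type*} [MeasurableSpace Ω] (μ : Measure Ω) [IsProbabilityMeasure μ]
    (m : ℕ) (p : Fin m → Ω → ℝ) (hmeas : ∀ i, Measurable (p i))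
    (hsu : ∀ i, SupraUniform μ (p i))
    (lam α : ℝ) (hlam : lam ∈ Set.Ioc (0 : ℝ) 1) (hα : α ∈ Set.Ioo (0 : ℝ) 1)
    (R : Ω → ℝ)
    (hR : ∀ ω, R ω = ∑ i, (if p i ω ≤ lam then (1 : ℝ) else 0))
    (ER : ℝ) (hER : ER = ∫ ω, R ω ∂μ) (hERpos : 0 < ER)
    (hthresh : α * lam / ER ≤ lam) :
    (μ {ω | ∃ i, p i ω < α * lam / ER}).toReal ≤ α := by
  have hER_sum : ER = ∑ i, μ.real {ω | p i ω ≤ lam} := by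
    rw [hER, ← integral_sum_indicator_one _
      fun i _ => measurableSet_le (hmeas i) measurable_const]
    congr with ω
    simp only [hR, Set.indicator_apply, Set.mem_ofPred_eq, Pi.one_apply]
  have hbound := measureReal_exists_lt_le_of_supraUniform hsu
    (div_nonneg (mul_pos hα.1 hlam.1).le hERpos.le) hthresh hlam.2
  rw [← hER_sum] at hbound
  calc μ.real {ω | ∃ i, p i ω < α * lam / ER} ≤ α * lam / ER / lam * ER := hbound
    _ = α := by field_simp [hlam.1.ne', hERpos.ne']

/-- let `p₁,…,p_m` be supra-uniform `[0,1]`-valued random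
variables, `lam ∈ (0,1]`, `α ∈ (0,1)`, `R = ∑ 1{p_i ≤ lam}` with `E[R] > 0`
(and the rejection threshold `α lam / E[R]` at most `lam`). Then the procedure
rejecting `H_i` when `p_i < α lam / E[R]` controls the FWER at level `α`. -/
theorem oracle_conditionalized_bonferroni_fwer
    {Ω : Type*} [MeasurableSpace Ω] (μ : Measure Ω) [IsProbabilityMeasure μ]
    (m : ℕ) (p : Fin m → Ω → ℝ) (hmeas : ∀ i, Measurable (p i))
    (hrange : ∀ i ω, p i ω ∈ Set.Icc (0 : ℝ) 1)
    (hsu : ∀ i, SupraUniform μ (p i))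
    (lam α : ℝ) (hlam : lam ∈ Set.Ioc (0 : ℝ) 1) (hα : α ∈ Set.Ioo (0 : ℝ) 1)
    (R : Ω → ℝ)
    (hR : ∀ ω, R ω = ∑ i, (if p i ω ≤ lam then (1 : ℝ) else 0))
    (ER : ℝ) (hER : ER = ∫ ω, R ω ∂μ) (hERpos : 0 < ER)
    (hthresh : α * lam / ER ≤ lam) :
    (μ {ω | ∃ i, p i ω < α * lam / ER}).toReal ≤ α :=
  oracle_conditionalized_bonferroni_fwer_general μ m p hmeas hsu lam α hlam hα R hR ER hER hERpos
    hthresh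
end

section
/- Let (p_1, p_2) be a pair of [0,1]-valued random variables, each marginally Uniform[0,1], such that X_1 = Φ^{-1}(1-p_1) and X_2 = Φ^{-1}(1-p_2) are positive quadrant dependent. If α, λ ∈ (0,1) satisfy 1 - (1 - λα/2)^2 + 2(1-λ)λα ≤ α, then the FWER of the conditionalized Bonferroni procedure is at most α. -/
set_option autoImplicit false

open MeasureTheory

/-!
Write `c = lam * α`. A hypothesis can only be rejected with threshold `c / 2` (both p-values
below `lam`) or threshold `c` with the other p-value above `lam`, so the rejection event lies in
`{p₁ < c/2 ∨ p₂ < c/2} ∪ {p₁ < c, lam < p₂} ∪ {lam < p₁, p₂ < c}`. Each piece is the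
complement, inside a set of known probability, of a joint upper-tail event, which positive
quadrant dependence bounds from below: the three pieces have probability at most
`1 - (1 - c/2)²`, `c (1 - lam)` and `c (1 - lam)`.
-/

lemma cbp_rejection_cases {x y lam c : ℝ} (hc : c ≤ lam)
    (h : x < c / max ((if x ≤ lam then 1 else 0) + (if y ≤ lam then 1 else 0)) 1 ∨
      y < c / max ((if x ≤ lam then 1 else 0) + (if y ≤ lam then 1 else 0)) 1) :
    (x < c / 2 ∨ y < c / 2) ∨ (x < c ∧ lam < y) ∨ (lam < x ∧ y < c) := by
  split_ifs at h with hx hy hy <;> norm_num at h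
  · exact Or.inl h
  · exact h.elim (fun h => Or.inr (Or.inl ⟨h, lt_of_not_ge hy⟩))
      fun h => absurd hx (by linarith)
  · exact h.elim (fun h => absurd hy (by linarith))
      fun h => Or.inr (Or.inr ⟨lt_of_not_ge hx, h⟩)
  · exact h.elim (fun h => absurd hx (by linarith)) fun h => absurd hy (by linarith)

section

variable {Ω : Type*} [MeasurableSpace Ω] {μ : Measure Ω}

lemma measureReal_le_sub_of_disjoint [IsFiniteMeasure μ] {s t u : Set Ω} (ht : MeasurableSet t)
    (hst : Disjoint s t) (hu : s ∪ t ⊆ u) : μ.real s ≤ μ.real u - μ.real t := by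
  have := measureReal_mono (μ := μ) hu
  rw [measureReal_union hst ht] at this
  linarith

variable [IsProbabilityMeasure μ] {p q : Ω → ℝ}

lemma measureReal_lt_or_lt_le (hp : Measurable p) (hq : Measurable q) {a b : ℝ}
    (hjoint : (1 - a) * (1 - b) ≤ μ.real {ω | a < p ω ∧ b < q ω}) :
    μ.real {ω | p ω < a ∨ q ω < b} ≤ 1 - (1 - a) * (1 - b) := by
  have hdisj : Disjoint {ω | p ω < a ∨ q ω < b} {ω | a < p ω ∧ b < q ω} := by
    rw [Set.disjoint_left]
    rintro ω (h | h) ⟨h₁, h₂⟩ <;> linarith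
  have := measureReal_le_sub_of_disjoint (μ := μ) (t := {ω | a < p ω ∧ b < q ω})
    ((measurableSet_lt measurable_const hp).inter (measurableSet_lt measurable_const hq)) hdisj
    (Set.subset_univ _)
  rw [probReal_univ] at this
  linarith

lemma measureReal_lt_and_lt_le (hp : Measurable p) (hq : Measurable q) {c lam : ℝ}
    (hunif : μ.real {ω | q ω ≤ lam} = lam)
    (hjoint : (1 - c) * (1 - lam) ≤ μ.real {ω | c < p ω ∧ lam < q ω}) :
    μ.real {ω | p ω < c ∧ lam < q ω} ≤ c * (1 - lam) := by
  have htail : μ.real {ω | lam < q ω} = 1 - lam := by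
    simpa only [Set.compl_ofPred, not_le, hunif] using
      probReal_compl_eq_one_sub (μ := μ) (s := {ω | q ω ≤ lam})
        (measurableSet_le hq measurable_const)
  have hdisj : Disjoint {ω | p ω < c ∧ lam < q ω} {ω | c < p ω ∧ lam < q ω} := by
    rw [Set.disjoint_left]
    rintro ω ⟨h₁, -⟩ ⟨h₂, -⟩
    linarith
  have := measureReal_le_sub_of_disjoint (μ := μ) (t := {ω | c < p ω ∧ lam < q ω})
    (u := {ω | lam < q ω})
    ((measurableSet_lt measurable_const hp).inter (measurableSet_lt measurable_const hq)) hdisj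
    (Set.union_subset (fun ω h => h.2) fun ω h => h.2)
  rw [htail] at this
  linarith

end

theorem cbp_fwer_bivariate_pqd_general
    {Ω : Type*} [MeasurableSpace Ω] (μ : Measure Ω) [IsProbabilityMeasure μ]
    (p₁ p₂ : Ω → ℝ) (hm₁ : Measurable p₁) (hm₂ : Measurable p₂)
    (hunif₁ : ∀ t ∈ Set.Icc (0 : ℝ) 1, (μ {ω | p₁ ω ≤ t}).toReal = t)
    (hunif₂ : ∀ t ∈ Set.Icc (0 : ℝ) 1, (μ {ω | p₂ ω ≤ t}).toReal = t)
    (hpqd' : ∀ s ∈ Set.Icc (0 : ℝ) 1, ∀ t ∈ Set.Icc (0 : ℝ) 1,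
      (1 - s) * (1 - t) ≤ (μ {ω | s < p₁ ω ∧ t < p₂ ω}).toReal)
    (lam α : ℝ) (hlam : lam ∈ Set.Ioo (0 : ℝ) 1) (hα : α ∈ Set.Ioo (0 : ℝ) 1)
    (hcond : 1 - (1 - lam * α / 2)^2 + 2 * (1 - lam) * lam * α ≤ α)
    (R : Ω → ℝ)
    (hR : ∀ ω, R ω = (if p₁ ω ≤ lam then (1 : ℝ) else 0)
                    + (if p₂ ω ≤ lam then (1 : ℝ) else 0)) :
    (μ {ω | p₁ ω < lam * α / max (R ω) 1 ∨ p₂ ω < lam * α / max (R ω) 1}).toReal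
      ≤ α := by
  obtain ⟨hl0, hl1⟩ := hlam
  obtain ⟨ha0, ha1⟩ := hα
  set c := lam * α
  have hcl : c < lam := mul_lt_of_lt_one_right hl0 ha1
  have hc : c ∈ Set.Icc (0 : ℝ) 1 := ⟨by positivity, by linarith⟩
  have hc2 : c / 2 ∈ Set.Icc (0 : ℝ) 1 := ⟨by positivity, by linarith⟩
  have hl : lam ∈ Set.Icc (0 : ℝ) 1 := ⟨hl0.le, hl1.le⟩
  have hcover : {ω | p₁ ω < c / max (R ω) 1 ∨ p₂ ω < c / max (R ω) 1} ⊆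
      {ω | p₁ ω < c / 2 ∨ p₂ ω < c / 2} ∪ {ω | p₁ ω < c ∧ lam < p₂ ω} ∪
        {ω | p₂ ω < c ∧ lam < p₁ ω} := fun ω hω => by
    rw [Set.mem_ofPred_eq, hR] at hω
    rcases cbp_rejection_cases hcl.le hω with h | h | h
    exacts [Or.inl (Or.inl h), Or.inl (Or.inr h), Or.inr h.symm]
  have hboth := measureReal_lt_or_lt_le hm₁ hm₂ (hpqd' _ hc2 _ hc2)
  have hfirst := measureReal_lt_and_lt_le hm₁ hm₂ (hunif₂ _ hl) (hpqd' _ hc _ hl)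
  have hsecond := measureReal_lt_and_lt_le hm₂ hm₁ (hunif₁ _ hl) (by
    simpa only [mul_comm, and_comm, measureReal_def] using hpqd' _ hl _ hc)
  calc μ.real {ω | p₁ ω < c / max (R ω) 1 ∨ p₂ ω < c / max (R ω) 1}
      ≤ μ.real {ω | p₁ ω < c / 2 ∨ p₂ ω < c / 2} + μ.real {ω | p₁ ω < c ∧ lam < p₂ ω} +
          μ.real {ω | p₂ ω < c ∧ lam < p₁ ω} :=
        (measureReal_mono hcover).trans <| (measureReal_union_le _ _).trans <|
          add_le_add_left (measureReal_union_le _ _) _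
    _ ≤ α := by linear_combination hboth + hfirst + hsecond + hcond

/-- let `(p₁, p₂)` be marginally Uniform[0,1] and positively
quadrant dependent (equivalently, `X_i = Φ⁻¹(1-p_i)` are PQD):
`P(p₁ ≤ s, p₂ ≤ t) ≥ s t` and `P(p₁ > s, p₂ > t) ≥ (1-s)(1-t)` for
`s, t ∈ [0,1]`. If `α, lam ∈ (0,1)` satisfy
`1 - (1 - lam α/2)² + 2(1-lam) lam α ≤ α`, then the FWER of the
conditionalized Bonferroni procedure is at most `α`. -/
theorem cbp_fwer_bivariate_pqd
    {Ω : Type*} [MeasurableSpace Ω] (μ : Measure Ω) [IsProbabilityMeasure μ]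
    (p₁ p₂ : Ω → ℝ) (hm₁ : Measurable p₁) (hm₂ : Measurable p₂)
    (hunif₁ : ∀ t ∈ Set.Icc (0 : ℝ) 1, (μ {ω | p₁ ω ≤ t}).toReal = t)
    (hunif₂ : ∀ t ∈ Set.Icc (0 : ℝ) 1, (μ {ω | p₂ ω ≤ t}).toReal = t)
    (hpqd : ∀ s ∈ Set.Icc (0 : ℝ) 1, ∀ t ∈ Set.Icc (0 : ℝ) 1,
      s * t ≤ (μ {ω | p₁ ω ≤ s ∧ p₂ ω ≤ t}).toReal)
    (hpqd' : ∀ s ∈ Set.Icc (0 : ℝ) 1, ∀ t ∈ Set.Icc (0 : ℝ) 1,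
      (1 - s) * (1 - t) ≤ (μ {ω | s < p₁ ω ∧ t < p₂ ω}).toReal)
    (lam α : ℝ) (hlam : lam ∈ Set.Ioo (0 : ℝ) 1) (hα : α ∈ Set.Ioo (0 : ℝ) 1)
    (hcond : 1 - (1 - lam * α / 2)^2 + 2 * (1 - lam) * lam * α ≤ α)
    (R : Ω → ℝ)
    (hR : ∀ ω, R ω = (if p₁ ω ≤ lam then (1 : ℝ) else 0)
                    + (if p₂ ω ≤ lam then (1 : ℝ) else 0)) :
    (μ {ω | p₁ ω < lam * α / max (R ω) 1 ∨ p₂ ω < lam * α / max (R ω) 1}).toReal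
      ≤ α :=
  cbp_fwer_bivariate_pqd_general μ p₁ p₂ hm₁ hm₂ hunif₁ hunif₂ hpqd' lam α hlam hα hcond R hR
end

section
/- For z_0 = Φ^{-1}(1-λ), z_1 = Φ^{-1}(1-λα), z_2 = Φ^{-1}(1-λα/2) with λ, α ∈ (0,1), define h(ρ) = exp(-(z_2 - ρz_2)^2 + (z_0 - ρz_2)^2) + 2·exp(-(z_1 - ρz_0)^2 + (z_2 - ρz_0)^2). If λ > 1/2 and λα ≤ 2/3, then h is nondecreasing on [0,1) and h(0) ≥ 2; hence h(ρ) ≥ 2 for all ρ ∈ [0,1). -/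
/-!
Both exponents of `h` are affine in `ρ` (the `ρ²` terms cancel), with slopes `2 z₂ (z₂ - z₀)` and
`2 z₀ (z₁ - z₂)`. These are nonnegative because `z₀ ≤ 0 ≤ z₂` and `z₁ ≤ z₂`, so `h` is monotone on
all of `ℝ`. By the symmetry `Φ (-x) = 1 - Φ x`, the bound `lam α ≤ 2/3` gives `-z₁ ≤ z₂`, hence
`z₁² ≤ z₂²`, so the second exponent is nonnegative at `ρ = 0` and `h 0 ≥ 0 + 2`.
-/

set_option autoImplicit false

open MeasureTheory ProbabilityTheory Set
open scoped NNReal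

namespace ProbabilityTheory

lemma strictMono_cdf_gaussianReal (μ : ℝ) {v : ℝ≥0} (hv : v ≠ 0) :
    StrictMono (cdf (gaussianReal μ v)) := by
  intro x y hxy
  have hIoc : gaussianReal μ v (Ioc x y) ≠ 0 := fun h0 ↦
    hxy.not_ge (by simpa using gaussianReal_absolutelyContinuous' μ hv h0)
  rw [← measure_cdf (gaussianReal μ v), StieltjesFunction.measure_Ioc, ne_eq,
    ENNReal.ofReal_eq_zero, not_le, sub_pos] at hIoc
  exact hIoc

lemma cdf_gaussianReal_neg {v : ℝ≥0} (hv : v ≠ 0) (x : ℝ) :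
    cdf (gaussianReal 0 v) (-x) = 1 - cdf (gaussianReal 0 v) x := by
  have hsymm : (gaussianReal 0 v).map (fun y ↦ -y) = gaussianReal 0 v := by
    rw [gaussianReal_map_neg, neg_zero]
  have hatom : gaussianReal 0 v {x} = 0 :=
    gaussianReal_absolutelyContinuous 0 hv Real.volume_singleton
  rw [cdf_eq_real, cdf_eq_real, ← hsymm, map_measureReal_apply (by fun_prop) measurableSet_Iic,
    hsymm, show (fun y : ℝ ↦ -y) ⁻¹' Iic (-x) = Ici x by ext; simp,
    measureReal_congr (Ioi_ae_eq_Ici' hatom).symm, ← compl_Iic,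
    probReal_compl_eq_one_sub measurableSet_Iic]

end ProbabilityTheory

lemma monotone_neg_sq_sub_add_sq_sub {a b c : ℝ} (h : 0 ≤ c * (a - b)) :
    Monotone fun ρ : ℝ ↦ -(a - ρ * c) ^ 2 + (b - ρ * c) ^ 2 := by
  intro ρ σ hρσ
  nlinarith [mul_nonneg h (sub_nonneg.2 hρσ)]

theorem h_ge_two_of_lam_alpha_general
    (lam α : ℝ) (hα : α ∈ Set.Ioo (0 : ℝ) 1)
    (hlam2 : 1/2 < lam) (hla : lam * α ≤ 2/3)
    (z₀ z₁ z₂ : ℝ)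
    (hz₀ : cdf (gaussianReal 0 1) z₀ = 1 - lam)
    (hz₁ : cdf (gaussianReal 0 1) z₁ = 1 - lam * α)
    (hz₂ : cdf (gaussianReal 0 1) z₂ = 1 - lam * α / 2)
    (h : ℝ → ℝ)
    (hh : ∀ ρ : ℝ, h ρ = Real.exp (-(z₂ - ρ * z₂)^2 + (z₀ - ρ * z₂)^2)
        + 2 * Real.exp (-(z₁ - ρ * z₀)^2 + (z₂ - ρ * z₀)^2)) :
    MonotoneOn h (Set.Ico (0 : ℝ) 1) ∧ 2 ≤ h 0 ∧ ∀ ρ ∈ Set.Ico (0 : ℝ) 1, 2 ≤ h ρ := by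
  have hla0 : 0 ≤ lam * α := (mul_pos (by linarith) hα.1).le
  have hΦ := strictMono_cdf_gaussianReal 0 one_ne_zero
  have hΦ0 : cdf (gaussianReal 0 1) 0 = 1 / 2 := by
    linarith [neg_zero (G := ℝ) ▸ cdf_gaussianReal_neg one_ne_zero 0]
  have hz₀0 : z₀ ≤ 0 := hΦ.le_iff_le.1 (by rw [hz₀, hΦ0]; linarith)
  have hz₂0 : 0 ≤ z₂ := hΦ.le_iff_le.1 (by rw [hz₂, hΦ0]; linarith)
  have hz₁z₂ : z₁ ≤ z₂ := hΦ.le_iff_le.1 (by rw [hz₁, hz₂]; linarith)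
  have hnegz₁z₂ : -z₁ ≤ z₂ :=
    hΦ.le_iff_le.1 (by rw [cdf_gaussianReal_neg one_ne_zero, hz₁, hz₂]; linarith)
  have hmono : Monotone h := by
    rw [funext hh]
    refine (Real.exp_monotone.comp (monotone_neg_sq_sub_add_sq_sub ?_)).add
      ((Real.exp_monotone.comp (monotone_neg_sq_sub_add_sq_sub ?_)).const_mul zero_le_two)
    · exact mul_nonneg hz₂0 (by linarith)
    · exact mul_nonneg_of_nonpos_of_nonpos hz₀0 (by linarith)
  have h0 : 2 ≤ h 0 := by
    have hexp : 1 ≤ Real.exp (-(z₁ - 0 * z₀) ^ 2 + (z₂ - 0 * z₀) ^ 2) :=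
      Real.one_le_exp (by nlinarith)
    rw [hh]
    linarith [Real.exp_pos (-(z₂ - 0 * z₂) ^ 2 + (z₀ - 0 * z₂) ^ 2)]
  exact ⟨hmono.monotoneOn _, h0, fun ρ hρ ↦ h0.trans (hmono hρ.1)⟩

/-- with `z₀ = Φ⁻¹(1-lam)`, `z₁ = Φ⁻¹(1-lam α)`,
`z₂ = Φ⁻¹(1-lam α/2)` (`Φ` the standard normal CDF), define
`h ρ = exp(-(z₂-ρz₂)² + (z₀-ρz₂)²) + 2 exp(-(z₁-ρz₀)² + (z₂-ρz₀)²)`.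
If `lam > 1/2` and `lam α ≤ 2/3`, then `h` is nondecreasing on `[0,1)`,
`h 0 ≥ 2`, and hence `h ρ ≥ 2` for all `ρ ∈ [0,1)`. -/
theorem h_ge_two_of_lam_alpha
    (lam α : ℝ) (hlam : lam ∈ Set.Ioo (0 : ℝ) 1) (hα : α ∈ Set.Ioo (0 : ℝ) 1)
    (hlam2 : 1/2 < lam) (hla : lam * α ≤ 2/3)
    (z₀ z₁ z₂ : ℝ)
    (hz₀ : cdf (gaussianReal 0 1) z₀ = 1 - lam)
    (hz₁ : cdf (gaussianReal 0 1) z₁ = 1 - lam * α)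
    (hz₂ : cdf (gaussianReal 0 1) z₂ = 1 - lam * α / 2)
    (h : ℝ → ℝ)
    (hh : ∀ ρ : ℝ, h ρ = Real.exp (-(z₂ - ρ * z₂)^2 + (z₀ - ρ * z₂)^2)
        + 2 * Real.exp (-(z₁ - ρ * z₀)^2 + (z₂ - ρ * z₀)^2)) :
    MonotoneOn h (Set.Ico (0 : ℝ) 1) ∧ 2 ≤ h 0 ∧ ∀ ρ ∈ Set.Ico (0 : ℝ) 1, 2 ≤ h ρ :=
  h_ge_two_of_lam_alpha_general lam α hα hlam2 hla z₀ z₁ z₂ hz₀ hz₁ hz₂ h hh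
end

section
/- Let p_1, ..., p_m be independent [0,1]-valued random variables, each supra-uniform, and let λ ∈ (0,1]. For each subset K of {1,...,m}, condition on the event G_K = {p_i ≤ λ for i ∈ K, p_j > λ for j ∉ K} (assumed to have positive probability). Then conditionally on G_K, the rescaled values (p_i/λ)_{i ∈ K} are independent and each stochastically dominates Uniform[0,1]. -/
set_option autoImplicit false

open MeasureTheory ProbabilityTheory

/-!
The event `G_K` is a box `⋂ i, {p i ∈ b i}` with `b i = (-∞, λ]` for `i ∈ K` and `(λ, ∞)`
otherwise. Conditioning independent variables on a box keeps them independent, and each `p i`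
is then merely conditioned on its own side `{p i ∈ b i}`; for `i ∈ K` this is `{p i ≤ λ}`, where
supra-uniformity is exactly the required domination.
-/

namespace ProbabilityTheory

variable {ι Ω β : Type*} {mΩ : MeasurableSpace Ω} {mβ : MeasurableSpace β}
  {μ : Measure Ω} {X : ι → Ω → β} {t : ι → Set β}

lemma iIndepFun.pair_self (hX : iIndepFun X μ) : iIndepFun (fun i ω ↦ (X i ω, X i ω)) μ :=
  hX.comp (fun _ x ↦ (x, x)) fun _ ↦ measurable_id.prodMk measurable_id

lemma iIndepFun.cond_iInter_preimage [Finite ι] (hX : iIndepFun X μ)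
    (hXm : ∀ i, Measurable (X i)) (ht : ∀ i, MeasurableSet (t i)) (h0 : μ (⋂ i, X i ⁻¹' t i) ≠ 0) :
    iIndepFun X μ[|⋂ i, X i ⁻¹' t i] :=
  hX.pair_self.cond hXm (fun i hi ↦ h0 (measure_mono_null (Set.iInter_subset _ i) hi)) ht

lemma iIndepFun.cond_iInter_preimage_apply [Finite ι] (hX : iIndepFun X μ)
    (hXm : ∀ i, Measurable (X i)) (ht : ∀ i, MeasurableSet (t i))
    (h0 : μ (⋂ i, X i ⁻¹' t i) ≠ 0) (i : ι) {A : Set β} (hA : MeasurableSet A) :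
    μ[X i ⁻¹' A | ⋂ j, X j ⁻¹' t j] = μ[X i ⁻¹' A | X i ⁻¹' t i] := by
  simpa using cond_iInter (s := {i}) (f := fun j ↦ X j ⁻¹' A) hXm hX.pair_self
    (fun j _ ↦ ⟨A, hA, rfl⟩) (fun j _ hj ↦ h0 (measure_mono_null (Set.iInter_subset _ j) hj)) ht

end ProbabilityTheory

lemma SupraUniform.cond_div_lt_le {Ω : Type*} [MeasurableSpace Ω] {μ : Measure Ω}
    [IsFiniteMeasure μ] {p : Ω → ℝ} (hp : SupraUniform μ p) (hpm : Measurable p) {lam : ℝ}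
    (hlam : lam ∈ Set.Ioc 0 1) (h0 : μ {ω | p ω ≤ lam} ≠ 0) {t : ℝ} (ht : t ∈ Set.Icc 0 1) :
    (μ[{ω | p ω / lam < t} | {ω | p ω ≤ lam}]).toReal ≤ t := by
  have hset : {ω | p ω / lam < t} = {ω | p ω < t * lam} := by
    ext ω; exact div_lt_iff₀ hlam.1
  have hsu := hp (t * lam) lam (mul_nonneg ht.1 hlam.1.le) (mul_le_of_le_one_left hlam.1.le ht.2)
    hlam.2 (ENNReal.toReal_pos h0 (measure_ne_top μ _))
  rw [cond_apply (measurableSet_le hpm measurable_const), hset, ENNReal.toReal_mul,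
    ENNReal.toReal_inv, Set.inter_comm, inv_mul_eq_div]
  rwa [mul_div_cancel_right₀ t hlam.1.ne'] at hsu

theorem conditional_orthant_independent_dominating_general
    {Ω : Type*} [MeasurableSpace Ω] (μ : Measure Ω) [IsProbabilityMeasure μ]
    (m : ℕ) (p : Fin m → Ω → ℝ) (hmeas : ∀ i, Measurable (p i))
    (hindep : iIndepFun p μ)
    (hsu : ∀ i, SupraUniform μ (p i))
    (lam : ℝ) (hlam : lam ∈ Set.Ioc (0 : ℝ) 1)
    (K : Finset (Fin m))
    (G : Set Ω)
    (hG : G = {ω | (∀ i ∈ K, p i ω ≤ lam) ∧ (∀ j ∉ K, lam < p j ω)})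
    (hGpos : 0 < μ G) :
    iIndepFun
        (fun (i : {i : Fin m // i ∈ K}) (ω : Ω) => p i ω / lam) (μ[|G])
      ∧ ∀ i ∈ K, ∀ t ∈ Set.Icc (0 : ℝ) 1,
        ((μ[|G]) {ω | p i ω / lam < t}).toReal ≤ t := by
  set b : Fin m → Set ℝ := fun i ↦ if i ∈ K then Set.Iic lam else Set.Ioi lam
  have hb : ∀ i, MeasurableSet (b i) := fun i ↦ by
    by_cases hi : i ∈ K <;> simp [b, hi]
  obtain rfl : G = ⋂ i, p i ⁻¹' b i := by
    rw [hG]; ext ω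
    simp only [Set.mem_ofPred_eq, Set.mem_iInter, Set.mem_preimage, b]
    grind
  refine ⟨((hindep.cond_iInter_preimage hmeas hb hGpos.ne').precomp Subtype.val_injective).comp
    (fun _ x ↦ x / lam) (fun _ ↦ measurable_id.div_const lam), fun i hi t ht ↦ ?_⟩
  have hbi : b i = Set.Iic lam := if_pos hi
  have hcond := hindep.cond_iInter_preimage_apply hmeas hb hGpos.ne' i
    (A := {x | x / lam < t}) (measurableSet_lt (measurable_id.div_const lam) measurable_const)
  rw [hbi] at hcond
  change (μ[p i ⁻¹' {x | x / lam < t} | _]).toReal ≤ t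
  rw [hcond]
  refine (hsu i).cond_div_lt_le (hmeas i) hlam (fun h ↦ hGpos.ne' ?_) ht
  exact measure_mono_null (Set.iInter_subset _ i) (hbi ▸ h)

/-- let `p₁,…,p_m` be independent supra-uniform `[0,1]`-valued
random variables and `lam ∈ (0,1]`. For a subset `K` of `{1,…,m}`, condition on
the event `G_K = {p_i ≤ lam for i ∈ K, p_j > lam for j ∉ K}` (of positive
probability). Then, under `μ[|G_K]`, the rescaled values `(p_i/lam)_{i ∈ K}`
are independent and each stochastically dominates `Uniform[0,1]`:
`P(p_i/lam < t | G_K) ≤ t` for all `t ∈ [0,1]`. -/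
theorem conditional_orthant_independent_dominating
    {Ω : Type*} [MeasurableSpace Ω] (μ : Measure Ω) [IsProbabilityMeasure μ]
    (m : ℕ) (p : Fin m → Ω → ℝ) (hmeas : ∀ i, Measurable (p i))
    (hrange : ∀ i ω, p i ω ∈ Set.Icc (0 : ℝ) 1)
    (hindep : iIndepFun p μ)
    (hsu : ∀ i, SupraUniform μ (p i))
    (lam : ℝ) (hlam : lam ∈ Set.Ioc (0 : ℝ) 1)
    (K : Finset (Fin m))
    (G : Set Ω)
    (hG : G = {ω | (∀ i ∈ K, p i ω ≤ lam) ∧ (∀ j ∉ K, lam < p j ω)})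
    (hGpos : 0 < μ G) :
    iIndepFun
        (fun (i : {i : Fin m // i ∈ K}) (ω : Ω) => p i ω / lam) (μ[|G])
      ∧ ∀ i ∈ K, ∀ t ∈ Set.Icc (0 : ℝ) 1,
        ((μ[|G]) {ω | p i ω / lam < t}).toReal ≤ t :=
  conditional_orthant_independent_dominating_general μ m p hmeas hindep hsu lam hlam K G hG hGpos
end

section
/- Let U be a standard normal random variable and let μ ∈ ℝ, ρ ∈ [0,1), λ ∈ (0,1]. If E[1/Φ(μ - √ρ·U)] ≤ 1/λ, and if R | U is distributed as 1 + Binomial(m-1, Φ(μ - √ρ·U)), then E[1/R] ≤ 1/(mλ). -/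
open MeasureTheory ProbabilityTheory Real
open scoped NNReal

/-!
Given `U = u`, `R = 1 + X` with `X ~ Binomial(m-1, p)`, `p = q(u)`. The identity
`(k+1)⁻¹ · C(m-1,k) = m⁻¹ · C(m,k+1)` turns `E[1/(X+1)]` into `(1 - (1-p)^m)/(m p) ≤ 1/(m p)`,
and integrating over `u` gives `E[1/R] ≤ m⁻¹ E[1/q(U)] ≤ 1/(m λ)`. This last step needs `1/q(U)`
to be integrable (a non-integrable function has Bochner integral `0`): from `Φ(x) ≥ φ(|x| + 1)`
one gets `φ(u)/q(u) ≤ exp(((|μ₀ - √ρ u| + 1)² - u²)/2)`, which is dominated by a Gaussian in `u`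
because `ρ < 1`.
-/

theorem mul_sum_inv_succ_mul_binomial (n : ℕ) (p : ℝ) :
    ((n : ℝ) + 1) * p * ∑ k ∈ Finset.range (n + 1),
      ((k : ℝ) + 1)⁻¹ * ((n.choose k : ℝ) * p ^ k * (1 - p) ^ (n - k))
      = 1 - (1 - p) ^ (n + 1) := by
  have hterm : ∀ k ∈ Finset.range (n + 1), ((n : ℝ) + 1) * p *
      (((k : ℝ) + 1)⁻¹ * ((n.choose k : ℝ) * p ^ k * (1 - p) ^ (n - k)))
      = p ^ (k + 1) * (1 - p) ^ (n + 1 - (k + 1)) * ((n + 1).choose (k + 1) : ℝ) := by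
    intro k _
    have hchoose : ((n : ℝ) + 1) * n.choose k = (n + 1).choose (k + 1) * ((k : ℝ) + 1) := by
      exact_mod_cast Nat.add_one_mul_choose_eq n k
    rw [Nat.add_sub_add_right]
    field_simp
    linear_combination p ^ (k + 1) * (1 - p) ^ (n - k) * hchoose
  rw [Finset.mul_sum, Finset.sum_congr rfl hterm]
  have := add_pow p (1 - p) (n + 1)
  rw [add_sub_cancel, one_pow, Finset.sum_range_succ'] at this
  simp only [pow_zero, one_mul, Nat.sub_zero, Nat.choose_zero_right, Nat.cast_one, mul_one] at this
  linarith

theorem sum_inv_succ_mul_binomial_le {n : ℕ} {p : ℝ} (hp0 : 0 < p) (hp1 : p ≤ 1) :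
    ∑ k ∈ Finset.range (n + 1),
      ((k : ℝ) + 1)⁻¹ * ((n.choose k : ℝ) * p ^ k * (1 - p) ^ (n - k))
      ≤ (((n : ℝ) + 1) * p)⁻¹ := by
  have hnp : 0 < ((n : ℝ) + 1) * p := by positivity
  rw [← one_div, le_div_iff₀ hnp, mul_comm, mul_sum_inv_succ_mul_binomial]
  have : 0 ≤ (1 - p) ^ (n + 1) := pow_nonneg (by linarith) _
  linarith

theorem binomial_weight_nonneg {p : ℝ} (hp0 : 0 ≤ p) (hp1 : p ≤ 1) (n k : ℕ) :
    0 ≤ (n.choose k : ℝ) * p ^ k * (1 - p) ^ (n - k) := by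
  have := sub_nonneg.2 hp1
  positivity

theorem integrable_binomial_weight_comp {α : Type*} [MeasurableSpace α] {μ : Measure α}
    [IsFiniteMeasure μ] {q : α → ℝ} (hq : Measurable q) (hq0 : ∀ u, 0 ≤ q u)
    (hq1 : ∀ u, q u ≤ 1) (n k : ℕ) :
    Integrable (fun u => (n.choose k : ℝ) * q u ^ k * (1 - q u) ^ (n - k)) μ := by
  refine .of_bound (by fun_prop) (n.choose k) (ae_of_all _ fun u => ?_)
  rw [norm_of_nonneg (binomial_weight_nonneg (hq0 u) (hq1 u) n k)]
  have := sub_nonneg.2 (hq1 u)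
  calc (n.choose k : ℝ) * q u ^ k * (1 - q u) ^ (n - k) ≤ n.choose k * 1 * 1 := by
        gcongr
        · exact pow_le_one₀ (hq0 u) (hq1 u)
        · exact pow_le_one₀ this (by linarith [hq0 u])
    _ = n.choose k := by ring

theorem cdf_gaussianReal_pos (μ : ℝ) {v : ℝ≥0} (hv : v ≠ 0) (x : ℝ) :
    0 < cdf (gaussianReal μ v) x := by
  rw [cdf_eq_real]
  refine ENNReal.toReal_pos (fun h => ?_) (measure_ne_top _ _)
  simpa using gaussianReal_absolutelyContinuous' μ hv h

theorem gaussianPDFReal_le_of_abs_le {s t : ℝ} (h : |t| ≤ |s|) :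
    gaussianPDFReal 0 1 s ≤ gaussianPDFReal 0 1 t := by
  have : t ^ 2 ≤ s ^ 2 := sq_le_sq.2 h
  simp only [gaussianPDFReal_def, NNReal.coe_one, sub_zero, mul_one]
  gcongr

theorem gaussianPDFReal_le_cdf_gaussianReal (x : ℝ) :
    gaussianPDFReal 0 1 (|x| + 1) ≤ cdf (gaussianReal 0 1) x := by
  have hmono : ∀ t ∈ Set.Ioc (x - 1) x,
      gaussianPDFReal 0 1 (|x| + 1) ≤ gaussianPDFReal 0 1 t :=
    fun t ht => gaussianPDFReal_le_of_abs_le <| by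
      rw [abs_of_pos (by positivity : 0 < |x| + 1)]
      exact abs_le.2 ⟨by linarith [neg_abs_le x, ht.1], by linarith [le_abs_self x, ht.2]⟩
  calc gaussianPDFReal 0 1 (|x| + 1)
        = ∫ _ in Set.Ioc (x - 1) x, gaussianPDFReal 0 1 (|x| + 1) := by
        simp [Real.volume_real_Ioc]
    _ ≤ ∫ t in Set.Ioc (x - 1) x, gaussianPDFReal 0 1 t :=
        setIntegral_mono_on (integrableOn_const (by simp))
          (integrable_gaussianPDFReal 0 1).integrableOn measurableSet_Ioc hmono
    _ = (gaussianReal 0 1).real (Set.Ioc (x - 1) x) := by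
        rw [measureReal_def, gaussianReal_apply_eq_integral 0 one_ne_zero, ENNReal.toReal_ofReal
          (setIntegral_nonneg measurableSet_Ioc fun t _ => gaussianPDFReal_nonneg 0 1 t)]
    _ ≤ (gaussianReal 0 1).real (Set.Iic x) := measureReal_mono Set.Ioc_subset_Iic_self
    _ = cdf (gaussianReal 0 1) x := (cdf_eq_real _ x).symm

theorem inv_cdf_gaussianReal_mul_gaussianPDFReal_le (x u : ℝ) :
    (cdf (gaussianReal 0 1) x)⁻¹ * gaussianPDFReal 0 1 u
      ≤ exp (((|x| + 1) ^ 2 - u ^ 2) / 2) := by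
  have hratio : (gaussianPDFReal 0 1 (|x| + 1))⁻¹ * gaussianPDFReal 0 1 u
      = exp (((|x| + 1) ^ 2 - u ^ 2) / 2) := by
    have : (0 : ℝ) < √(2 * π) := by positivity
    simp only [gaussianPDFReal_def, NNReal.coe_one, sub_zero, mul_one]
    rw [mul_inv, inv_inv, ← exp_neg]
    field_simp
    rw [← exp_add]
    ring_nf
  calc (cdf (gaussianReal 0 1) x)⁻¹ * gaussianPDFReal 0 1 u
      ≤ (gaussianPDFReal 0 1 (|x| + 1))⁻¹ * gaussianPDFReal 0 1 u := by
        gcongr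
        · exact gaussianPDFReal_nonneg 0 1 u
        · exact gaussianPDFReal_pos 0 1 _ one_ne_zero
        · exact gaussianPDFReal_le_cdf_gaussianReal x
    _ = exp (((|x| + 1) ^ 2 - u ^ 2) / 2) := hratio

theorem integrable_gaussianReal_iff {μ : ℝ} {v : ℝ≥0} (hv : v ≠ 0) {f : ℝ → ℝ} :
    Integrable f (gaussianReal μ v) ↔ Integrable (fun x => f x * gaussianPDFReal μ v x) := by
  rw [gaussianReal_of_var_ne_zero μ hv, integrable_withDensity_iff (measurable_gaussianPDF μ v)
    (ae_of_all _ fun _ => gaussianPDF_lt_top)]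
  simp only [toReal_gaussianPDF]

theorem sq_abs_sub_mul_add_one_sub_sq_le (a : ℝ) {b : ℝ} (hb : b ^ 2 < 1) (u : ℝ) :
    (|a - b * u| + 1) ^ 2 - u ^ 2
      ≤ (|a| + 1) ^ 2 + 2 * (|a| + 1) ^ 2 / (1 - b ^ 2) - (1 - b ^ 2) / 2 * u ^ 2 := by
  have hδ : 0 < 1 - b ^ 2 := by linarith
  have htri : |a - b * u| + 1 ≤ |a| + 1 + |b| * |u| := by
    rw [← abs_mul]; linarith [abs_sub a (b * u)]
  have hsq : (|a - b * u| + 1) ^ 2 ≤ (|a| + 1 + |b| * |u|) ^ 2 :=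
    pow_le_pow_left₀ (by positivity) htri 2
  have hw : (|b| * |u|) ^ 2 = b ^ 2 * u ^ 2 := by rw [mul_pow, sq_abs, sq_abs]
  have hwu : (|b| * |u|) ^ 2 ≤ u ^ 2 := by rw [hw]; nlinarith [sq_nonneg u]
  have hcross : 2 * (|a| + 1) * (|b| * |u|)
      ≤ 2 * (|a| + 1) ^ 2 / (1 - b ^ 2) + (1 - b ^ 2) * u ^ 2 / 2 := by
    rw [div_add_div _ _ hδ.ne' two_ne_zero, le_div_iff₀ (by positivity)]
    nlinarith [sq_nonneg (2 * (|a| + 1) - (1 - b ^ 2) * (|b| * |u|)),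
      mul_le_mul_of_nonneg_left hwu (sq_nonneg (1 - b ^ 2))]
  nlinarith

theorem integrable_inv_cdf_gaussianReal_comp_affine (a : ℝ) {b : ℝ} (hb : b ^ 2 < 1) :
    Integrable (fun u => (cdf (gaussianReal 0 1) (a - b * u))⁻¹) (gaussianReal 0 1) := by
  have hβ : 0 < (1 - b ^ 2) / 4 := by linarith
  rw [integrable_gaussianReal_iff one_ne_zero]
  refine ((integrable_exp_neg_mul_sq hβ).const_mul
    (exp (((|a| + 1) ^ 2 + 2 * (|a| + 1) ^ 2 / (1 - b ^ 2)) / 2))).mono' ?_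
    (ae_of_all _ fun u => ?_)
  · exact (((cdf _).mono.measurable.comp (by fun_prop)).inv.mul
      (measurable_gaussianPDFReal 0 1)).aestronglyMeasurable
  · rw [norm_of_nonneg (mul_nonneg (inv_nonneg.2 (cdf_nonneg _ _)) (gaussianPDFReal_nonneg 0 1 u)),
      ← exp_add]
    refine (inv_cdf_gaussianReal_mul_gaussianPDFReal_le _ u).trans (exp_le_exp.2 ?_)
    linarith [sq_abs_sub_mul_add_one_sub_sq_le a hb u]

theorem integral_comp_eq_sum_of_mem {Ω α : Type*} [MeasurableSpace Ω] [MeasurableSpace α]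
    [MeasurableSingletonClass α] {P : Measure Ω} [IsFiniteMeasure P] {X : Ω → α}
    (hX : Measurable X) {s : Finset α} (hs : ∀ ω, X ω ∈ s) (f : α → ℝ) :
    ∫ ω, f (X ω) ∂P = ∑ a ∈ s, P.real (X ⁻¹' {a}) * f a := by
  have hfiber : ∀ a, MeasurableSet (X ⁻¹' {a}) := fun a => hX (measurableSet_singleton a)
  have hsplit : (fun ω => f (X ω))
      = fun ω => ∑ a ∈ s, (X ⁻¹' {a}).indicator (fun _ => f a) ω := by
    ext ω
    classical
    simp only [Set.indicator_apply, Set.mem_preimage, Set.mem_singleton_iff]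
    rw [Finset.sum_ite_eq, if_pos (hs ω)]
  rw [hsplit, integral_finsetSum _ fun a _ => (integrable_const _).indicator (hfiber a)]
  simp only [integral_indicator_const _ (hfiber _), smul_eq_mul]

theorem integral_comp_eq_sum_range_succ {Ω : Type*} [MeasurableSpace Ω] {P : Measure Ω}
    [IsFiniteMeasure P] {R : Ω → ℕ} (hR : Measurable R) {n : ℕ}
    (hR_range : ∀ ω, 1 ≤ R ω ∧ R ω ≤ n + 1) (f : ℕ → ℝ) :
    ∫ ω, f (R ω) ∂P
      = ∑ k ∈ Finset.range (n + 1), P.real (R ⁻¹' {k + 1}) * f (k + 1) := by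
  have hmem : ∀ ω, R ω ∈ (Finset.range (n + 1)).map (addRightEmbedding 1) := fun ω => by
    simp only [Finset.mem_map, Finset.mem_range, addRightEmbedding_apply]
    have := hR_range ω
    exact ⟨R ω - 1, by omega, by omega⟩
  rw [integral_comp_eq_sum_of_mem hR hmem f, Finset.sum_map]
  rfl

theorem integral_inv_le_of_binomial_mixture {Ω α : Type*} [MeasurableSpace Ω]
    [MeasurableSpace α] {P : Measure Ω} [IsFiniteMeasure P] {γ : Measure α} [IsFiniteMeasure γ]
    {R : Ω → ℕ} (hR : Measurable R) {n : ℕ}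
    (hR_range : ∀ ω, 1 ≤ R ω ∧ R ω ≤ n + 1)
    {q : α → ℝ} (hq_meas : Measurable q) (hq_pos : ∀ u, 0 < q u) (hq_le : ∀ u, q u ≤ 1)
    (hq_int : Integrable (fun u => (q u)⁻¹) γ)
    (hlaw : ∀ k ≤ n, P {ω | R ω = k + 1}
      = ∫⁻ u, ENNReal.ofReal ((n.choose k : ℝ) * q u ^ k * (1 - q u) ^ (n - k)) ∂γ) :
    ∫ ω, ((R ω : ℝ))⁻¹ ∂P ≤ ((n : ℝ) + 1)⁻¹ * ∫ u, (q u)⁻¹ ∂γ := by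
  set w : ℕ → α → ℝ := fun k u => (n.choose k : ℝ) * q u ^ k * (1 - q u) ^ (n - k)
  have hw_nonneg : ∀ k u, 0 ≤ w k u :=
    fun k u => binomial_weight_nonneg (hq_pos u).le (hq_le u) n k
  have hw_int : ∀ k, Integrable (w k) γ :=
    integrable_binomial_weight_comp hq_meas (fun u => (hq_pos u).le) hq_le n
  have hlaw_real : ∀ k ∈ Finset.range (n + 1),
      P.real (R ⁻¹' {k + 1}) = ∫ u, w k u ∂γ := by
    intro k hk
    rw [measureReal_def, integral_eq_lintegral_of_nonneg_ae (ae_of_all _ (hw_nonneg k))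
      (hw_int k).aestronglyMeasurable]
    exact congrArg ENNReal.toReal (hlaw k (Finset.mem_range_succ_iff.1 hk))
  calc ∫ ω, ((R ω : ℝ))⁻¹ ∂P
      = ∑ k ∈ Finset.range (n + 1), P.real (R ⁻¹' {k + 1}) * ((k : ℝ) + 1)⁻¹ := by
        rw [integral_comp_eq_sum_range_succ hR hR_range fun k => (k : ℝ)⁻¹]
        push_cast; rfl
    _ = ∫ u, ∑ k ∈ Finset.range (n + 1), ((k : ℝ) + 1)⁻¹ * w k u ∂γ := by
        rw [integral_finsetSum _ fun k _ => (hw_int k).const_mul _]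
        refine Finset.sum_congr rfl fun k hk => ?_
        rw [hlaw_real k hk, integral_const_mul, mul_comm]
    _ ≤ ∫ u, (((n : ℝ) + 1) * q u)⁻¹ ∂γ := by
        refine integral_mono (integrable_finsetSum _ fun k _ => (hw_int k).const_mul _) ?_
          fun u => sum_inv_succ_mul_binomial_le (hq_pos u) (hq_le u)
        simpa only [mul_inv] using hq_int.const_mul _
    _ = ((n : ℝ) + 1)⁻¹ * ∫ u, (q u)⁻¹ ∂γ := by
        simp only [mul_inv]; exact integral_const_mul _ _

theorem inv_R_expectation_bound_general
    {Ω : Type*} [MeasurableSpace Ω] (P : Measure Ω) [IsProbabilityMeasure P]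
    (m : ℕ) (hm : 1 ≤ m)
    (μ₀ ρ lam : ℝ) (hρ : ρ ∈ Set.Ico (0 : ℝ) 1)
    (U : Ω → ℝ)
    (R : Ω → ℕ) (hR : Measurable R)
    (q : ℝ → ℝ) (hq : ∀ u, q u = cdf (gaussianReal 0 1) (μ₀ - Real.sqrt ρ * u))
    -- conditionally on `U`, `R - 1` is binomial with parameters `m-1` and `q(U)`
    (hbin : ∀ (B : Set ℝ), MeasurableSet B → ∀ k : ℕ, k ≤ m - 1 →
      P ({ω | R ω = k + 1} ∩ U ⁻¹' B)
        = ∫⁻ u in B, ENNReal.ofReal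
            (((m - 1).choose k : ℝ) * q u ^ k * (1 - q u) ^ (m - 1 - k))
            ∂(gaussianReal 0 1))
    (hR_range : ∀ ω, 1 ≤ R ω ∧ R ω ≤ m)
    (hint : ∫ u, (q u)⁻¹ ∂(gaussianReal 0 1) ≤ lam⁻¹) :
    ∫ ω, ((R ω : ℝ))⁻¹ ∂P ≤ 1 / (m * lam) := by
  obtain ⟨n, rfl⟩ : ∃ n, m = n + 1 := ⟨m - 1, by omega⟩
  have hq_pos : ∀ u, 0 < q u := fun u => hq u ▸ cdf_gaussianReal_pos 0 one_ne_zero _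
  have hq_le : ∀ u, q u ≤ 1 := fun u => hq u ▸ cdf_le_one _ _
  have hq_meas : Measurable q := by
    rw [funext hq]; exact (cdf _).mono.measurable.comp (by fun_prop)
  have hq_int : Integrable (fun u => (q u)⁻¹) (gaussianReal 0 1) := by
    simp only [hq]
    exact integrable_inv_cdf_gaussianReal_comp_affine μ₀ (by rw [sq_sqrt hρ.1]; exact hρ.2)
  have hlaw : ∀ k ≤ n, P {ω | R ω = k + 1} = ∫⁻ u, ENNReal.ofReal
      ((n.choose k : ℝ) * q u ^ k * (1 - q u) ^ (n - k)) ∂(gaussianReal 0 1) := fun k hk => by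
    simpa using hbin Set.univ MeasurableSet.univ k hk
  calc ∫ ω, ((R ω : ℝ))⁻¹ ∂P
      ≤ ((n : ℝ) + 1)⁻¹ * ∫ u, (q u)⁻¹ ∂(gaussianReal 0 1) :=
        integral_inv_le_of_binomial_mixture hR hR_range hq_meas hq_pos hq_le hq_int hlaw
    _ ≤ ((n : ℝ) + 1)⁻¹ * lam⁻¹ := by gcongr
    _ = 1 / (((n + 1 : ℕ) : ℝ) * lam) := by push_cast; rw [one_div, mul_inv]

/-- let `U` be standard normal and suppose, given `U`, that `R` is
distributed as `1 + Binomial(m-1, q(U))` with `q(u) = Φ(μ₀ - √ρ·u)` (`Φ` the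
standard normal CDF). If `E[1/Φ(μ₀ - √ρ·U)] ≤ 1/lam`, then `E[1/R] ≤ 1/(m·lam)`. -/
theorem inv_R_expectation_bound
    {Ω : Type*} [MeasurableSpace Ω] (P : Measure Ω) [IsProbabilityMeasure P]
    (m : ℕ) (hm : 1 ≤ m)
    (μ₀ ρ lam : ℝ) (hρ : ρ ∈ Set.Ico (0 : ℝ) 1) (hlam : lam ∈ Set.Ioc (0 : ℝ) 1)
    (U : Ω → ℝ) (hU : Measurable U) (hUlaw : P.map U = gaussianReal 0 1)
    (R : Ω → ℕ) (hR : Measurable R)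
    (q : ℝ → ℝ) (hq : ∀ u, q u = cdf (gaussianReal 0 1) (μ₀ - Real.sqrt ρ * u))
    -- conditionally on `U`, `R - 1` is binomial with parameters `m-1` and `q(U)`
    (hbin : ∀ (B : Set ℝ), MeasurableSet B → ∀ k : ℕ, k ≤ m - 1 →
      P ({ω | R ω = k + 1} ∩ U ⁻¹' B)
        = ∫⁻ u in B, ENNReal.ofReal
            (((m - 1).choose k : ℝ) * q u ^ k * (1 - q u) ^ (m - 1 - k))
            ∂(gaussianReal 0 1))
    (hR_range : ∀ ω, 1 ≤ R ω ∧ R ω ≤ m)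
    (hint : ∫ u, (q u)⁻¹ ∂(gaussianReal 0 1) ≤ lam⁻¹) :
    ∫ ω, ((R ω : ℝ))⁻¹ ∂P ≤ 1 / (m * lam) :=
  inv_R_expectation_bound_general P m hm μ₀ ρ lam hρ U R hR q hq hbin hR_range hint
end
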